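/- arXiv:2305.15339 — 2 statements merged into one kernel-verified Lean document; each statement's English description precedes it below -/
import Mathlib

section
/- The space of derivations of the n-dimensional null-filiform associative algebra μ₀ⁿ has dimension n over ℂ. -/
/-- basis vectors -/
noncomputable def e (n : ℕ) (i : Fin n) : Fin n → ℂ := Pi.single i 1

/-- product of the null-filiform algebra μ₀ⁿ (0-based indices: index a ↔ e_{a+1}) -/
noncomputable def mul0 (n : ℕ) (x y : Fin n → ℂ) : Fin n → ℂ :=
  fun k => ∑ i : Fin n, ∑ j : Fin n,
    if (i : ℕ) + (j : ℕ) + 1 = (k : ℕ) then x i * y j else 0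

def IsDer {n : ℕ} (μ : (Fin n → ℂ) → (Fin n → ℂ) → Fin n → ℂ)
    (D : (Fin n → ℂ) →ₗ[ℂ] (Fin n → ℂ)) : Prop :=
  ∀ x y, D (μ x y) = μ (D x) y + μ x (D y)

def IsLocDer {n : ℕ} (μ : (Fin n → ℂ) → (Fin n → ℂ) → Fin n → ℂ)
    (Δ : (Fin n → ℂ) →ₗ[ℂ] (Fin n → ℂ)) : Prop :=
  ∀ x, ∃ D, IsDer μ D ∧ Δ x = D x

/-- the submodule of derivations, given bilinearity of μ -/
noncomputable def derSubmodule (n : ℕ) (μ : (Fin n → ℂ) → (Fin n → ℂ) → Fin n → ℂ)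
    (hal : ∀ x y z, μ (x + y) z = μ x z + μ y z)
    (har : ∀ x y z, μ x (y + z) = μ x y + μ x z)
    (hsl : ∀ (c : ℂ) x y, μ (c • x) y = c • μ x y)
    (hsr : ∀ (c : ℂ) x y, μ x (c • y) = c • μ x y) :
    Submodule ℂ ((Fin n → ℂ) →ₗ[ℂ] (Fin n → ℂ)) where
  carrier := {D | IsDer μ D}
  zero_mem' := by
    intro x y
    have h1 : μ 0 y = 0 := by simpa using hsl 0 0 y
    have h2 : μ x 0 = 0 := by simpa using hsr 0 x 0
    simp [h1, h2]
  add_mem' := by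
    intro D1 D2 h1 h2 x y
    simp only [LinearMap.add_apply, h1 x y, h2 x y, hal, har]
    abel
  smul_mem' := by
    intro c D hD x y
    simp only [LinearMap.smul_apply, hD x y, smul_add, hsl, hsr]

/-- the submodule of local derivations, given bilinearity of μ -/
noncomputable def locDerSubmodule (n : ℕ) (μ : (Fin n → ℂ) → (Fin n → ℂ) → Fin n → ℂ)
    (hal : ∀ x y z, μ (x + y) z = μ x z + μ y z)
    (har : ∀ x y z, μ x (y + z) = μ x y + μ x z)
    (hsl : ∀ (c : ℂ) x y, μ (c • x) y = c • μ x y)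
    (hsr : ∀ (c : ℂ) x y, μ x (c • y) = c • μ x y) :
    Submodule ℂ ((Fin n → ℂ) →ₗ[ℂ] (Fin n → ℂ)) where
  carrier := {Δ | IsLocDer μ Δ}
  zero_mem' := by
    intro x
    exact ⟨0, (derSubmodule n μ hal har hsl hsr).zero_mem, rfl⟩
  add_mem' := by
    intro D1 D2 h1 h2 x
    obtain ⟨E1, hE1, he1⟩ := h1 x
    obtain ⟨E2, hE2, he2⟩ := h2 x
    exact ⟨E1 + E2, (derSubmodule n μ hal har hsl hsr).add_mem hE1 hE2, by
      simp [he1, he2]⟩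
  smul_mem' := by
    intro c Δ hΔ x
    obtain ⟨E, hE, he⟩ := hΔ x
    exact ⟨c • E, (derSubmodule n μ hal har hsl hsr).smul_mem c hE, by simp [he]⟩

lemma mul0_add_left (n : ℕ) (x y z : Fin n → ℂ) :
    mul0 n (x + y) z = mul0 n x z + mul0 n y z := by
  funext k
  simp only [mul0, Pi.add_apply]
  rw [← Finset.sum_add_distrib]
  refine Finset.sum_congr rfl fun i _ => ?_
  rw [← Finset.sum_add_distrib]
  refine Finset.sum_congr rfl fun j _ => ?_
  split <;> ring

lemma mul0_add_right (n : ℕ) (x y z : Fin n → ℂ) :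
    mul0 n x (y + z) = mul0 n x y + mul0 n x z := by
  funext k
  simp only [mul0, Pi.add_apply]
  rw [← Finset.sum_add_distrib]
  refine Finset.sum_congr rfl fun i _ => ?_
  rw [← Finset.sum_add_distrib]
  refine Finset.sum_congr rfl fun j _ => ?_
  split <;> ring

lemma mul0_smul_left (n : ℕ) (c : ℂ) (x y : Fin n → ℂ) :
    mul0 n (c • x) y = c • mul0 n x y := by
  funext k
  simp only [mul0, Pi.smul_apply, smul_eq_mul, Finset.mul_sum]
  refine Finset.sum_congr rfl fun i _ => ?_
  refine Finset.sum_congr rfl fun j _ => ?_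
  split <;> ring

lemma mul0_smul_right (n : ℕ) (c : ℂ) (x y : Fin n → ℂ) :
    mul0 n x (c • y) = c • mul0 n x y := by
  funext k
  simp only [mul0, Pi.smul_apply, smul_eq_mul, Finset.mul_sum]
  refine Finset.sum_congr rfl fun i _ => ?_
  refine Finset.sum_congr rfl fun j _ => ?_
  split <;> ring


lemma mul0_e_apply (n : ℕ) (i j k : Fin n) :
    mul0 n (e n i) (e n j) k = if (i:ℕ)+(j:ℕ)+1 = (k:ℕ) then 1 else 0 := by
  simp only [mul0, e, Pi.single_apply, mul_ite, ite_mul, mul_one, mul_zero, zero_mul]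
  rw [Finset.sum_eq_single i]
  · rw [Finset.sum_eq_single j]
    · simp
    · intro b _ hb; simp [hb]
    · simp
  · intro b _ hb; simp [hb]
  · simp

lemma mul0_zero_left (n : ℕ) (y : Fin n → ℂ) : mul0 n 0 y = 0 := by
  simpa using mul0_smul_left n 0 0 y

lemma mul0_zero_right (n : ℕ) (x : Fin n → ℂ) : mul0 n x 0 = 0 := by
  simpa using mul0_smul_right n 0 x 0

lemma e_succ (n : ℕ) (k : ℕ) (h : k + 1 < n) :
    e n ⟨k+1, h⟩ = mul0 n (e n ⟨k, by omega⟩) (e n ⟨0, by omega⟩) := by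
  funext m
  rw [mul0_e_apply]
  simp only [e, Pi.single_apply, Fin.ext_iff]
  split_ifs with h1 h2 <;> first | rfl | omega

lemma repr_sum (n : ℕ) (x : Fin n → ℂ) : ∑ i, x i • e n i = x := by
  funext m
  simp [e, Finset.sum_apply, Pi.single_apply]

lemma der_e_eq_zero (n : ℕ) (hn : 0 < n) (D : (Fin n → ℂ) →ₗ[ℂ] (Fin n → ℂ))
    (hD : IsDer (mul0 n) D) (h0 : D (e n ⟨0, hn⟩) = 0) :
    ∀ k : Fin n, D (e n k) = 0 := by
  suffices H : ∀ k (hk : k < n), D (e n ⟨k, hk⟩) = 0 by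
    intro k; simpa using H k k.isLt
  intro k
  induction k with
  | zero => intro hk; exact h0
  | succ m ih =>
    intro hk
    rw [e_succ n m hk, hD, ih (by omega), h0, mul0_zero_left, mul0_zero_right, add_zero]

lemma der_eq_zero (n : ℕ) (hn : 0 < n) (D : (Fin n → ℂ) →ₗ[ℂ] (Fin n → ℂ))
    (hD : IsDer (mul0 n) D) (h0 : D (e n ⟨0, hn⟩) = 0) : D = 0 := by
  apply LinearMap.ext; intro x
  have hx : x = ∑ i, x i • e n i := (repr_sum n x).symm
  rw [hx, map_sum]
  simp [der_e_eq_zero n hn D hD h0]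

lemma mul0_e_eq (n : ℕ) (i j : Fin n) (h : (i:ℕ)+(j:ℕ)+1 < n) :
    mul0 n (e n i) (e n j) = e n ⟨(i:ℕ)+(j:ℕ)+1, h⟩ := by
  funext m
  rw [mul0_e_apply]
  simp only [e, Pi.single_apply, Fin.ext_iff]
  split_ifs <;> first | rfl | omega

lemma mul0_e_eq_zero (n : ℕ) (i j : Fin n) (h : ¬ (i:ℕ)+(j:ℕ)+1 < n) :
    mul0 n (e n i) (e n j) = 0 := by
  funext m
  rw [mul0_e_apply]
  have := m.isLt
  rw [if_neg (by omega)]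
  rfl

noncomputable def mul0L (n : ℕ) : (Fin n → ℂ) →ₗ[ℂ] (Fin n → ℂ) →ₗ[ℂ] (Fin n → ℂ) :=
  LinearMap.mk₂ ℂ (mul0 n) (mul0_add_left n) (mul0_smul_left n) (mul0_add_right n)
    (mul0_smul_right n)

@[simp] lemma mul0L_apply (n : ℕ) (x y : Fin n → ℂ) : mul0L n x y = mul0 n x y := rfl

lemma isDer_of_basis (n : ℕ) (D : (Fin n → ℂ) →ₗ[ℂ] (Fin n → ℂ))
    (h : ∀ i j, D (mul0 n (e n i) (e n j)) =
      mul0 n (D (e n i)) (e n j) + mul0 n (e n i) (D (e n j))) :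
    IsDer (mul0 n) D := by
  intro x y
  rw [show x = ∑ i, x i • e n i from (repr_sum n x).symm,
      show y = ∑ j, y j • e n j from (repr_sum n y).symm]
  simp only [← mul0L_apply]
  simp only [map_sum, map_smul, LinearMap.sum_apply, LinearMap.smul_apply, Finset.smul_sum]
  simp only [mul0L_apply]
  simp only [h, smul_add, Finset.sum_add_distrib]

/-- extension of a by zero -/
noncomputable def ext0 (n : ℕ) (a : Fin n → ℂ) : ℕ → ℂ :=
  fun t => if h : t < n then a ⟨t, h⟩ else 0

/-- the derivation with D(e_k) = (k+1)·∑ a_t e_{k+t} -/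
noncomputable def Dmat (n : ℕ) (a : Fin n → ℂ) : (Fin n → ℂ) →ₗ[ℂ] (Fin n → ℂ) :=
  Matrix.mulVecLin (Matrix.of fun m k : Fin n =>
    if (k:ℕ) ≤ (m:ℕ) then (((k:ℕ):ℂ)+1) * ext0 n a ((m:ℕ)-(k:ℕ)) else 0)

lemma Dmat_e_apply (n : ℕ) (a : Fin n → ℂ) (k m : Fin n) :
    Dmat n a (e n k) m =
      if (k:ℕ) ≤ (m:ℕ) then (((k:ℕ):ℂ)+1) * ext0 n a ((m:ℕ)-(k:ℕ)) else 0 := by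
  simp [Dmat, e, Matrix.mulVecLin_apply, Matrix.mulVec_single]

lemma mul0_right_e_apply (n : ℕ) (x : Fin n → ℂ) (j m : Fin n) :
    mul0 n x (e n j) m = if (j:ℕ)+1 ≤ (m:ℕ)
      then x ⟨(m:ℕ)-(j:ℕ)-1,
        Nat.lt_of_le_of_lt (le_trans (Nat.sub_le _ _) (Nat.sub_le _ _)) m.isLt⟩
      else 0 := by
  have step : ∀ i' : Fin n,
      (∑ j' : Fin n, if (i':ℕ)+(j':ℕ)+1 = (m:ℕ) then x i' * (e n j j') else 0)
        = if (i':ℕ)+(j:ℕ)+1 = (m:ℕ) then x i' else 0 := by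
    intro i'
    rw [Finset.sum_eq_single j]
    · simp [e]
    · intro b _ hb; simp [e, Pi.single_apply, hb]
    · simp
  simp only [mul0]
  rw [Finset.sum_congr rfl (fun i' _ => step i')]
  by_cases hc : (j:ℕ)+1 ≤ (m:ℕ)
  · rw [if_pos hc,
      Finset.sum_eq_single (⟨(m:ℕ)-(j:ℕ)-1,
        Nat.lt_of_le_of_lt (le_trans (Nat.sub_le _ _) (Nat.sub_le _ _)) m.isLt⟩ : Fin n)]
    · rw [if_pos (by simp; omega)]
    · intro b _ hb
      rw [if_neg]
      intro hcontra
      exact hb (Fin.ext (by simp only [Fin.val_mk]; omega))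
    · simp
  · rw [if_neg hc, Finset.sum_eq_zero]
    intro b _
    rw [if_neg (by omega)]

lemma mul0_left_e_apply (n : ℕ) (i : Fin n) (x : Fin n → ℂ) (m : Fin n) :
    mul0 n (e n i) x m = if (i:ℕ)+1 ≤ (m:ℕ)
      then x ⟨(m:ℕ)-(i:ℕ)-1,
        Nat.lt_of_le_of_lt (le_trans (Nat.sub_le _ _) (Nat.sub_le _ _)) m.isLt⟩
      else 0 := by
  have step : ∀ i' : Fin n,
      (∑ j' : Fin n, if (i':ℕ)+(j':ℕ)+1 = (m:ℕ) then (e n i i') * x j' else 0)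
        = if i' = i then (∑ j' : Fin n, if (i:ℕ)+(j':ℕ)+1 = (m:ℕ) then x j' else 0) else 0 := by
    intro i'
    by_cases hi : i' = i
    · subst hi; simp [e]
    · simp [e, Pi.single_apply, hi]
  simp only [mul0]
  rw [Finset.sum_congr rfl (fun i' _ => step i'), Finset.sum_ite_eq' Finset.univ i]
  simp only [Finset.mem_univ, if_true]
  by_cases hc : (i:ℕ)+1 ≤ (m:ℕ)
  · rw [if_pos hc,
      Finset.sum_eq_single (⟨(m:ℕ)-(i:ℕ)-1,
        Nat.lt_of_le_of_lt (le_trans (Nat.sub_le _ _) (Nat.sub_le _ _)) m.isLt⟩ : Fin n)]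
    · rw [if_pos (by simp; omega)]
    · intro b _ hb
      rw [if_neg]
      intro hcontra
      exact hb (Fin.ext (by simp only [Fin.val_mk]; omega))
    · simp
  · rw [if_neg hc, Finset.sum_eq_zero]
    intro b _
    rw [if_neg (by omega)]

lemma isDer_Dmat (n : ℕ) (a : Fin n → ℂ) : IsDer (mul0 n) (Dmat n a) := by
  apply isDer_of_basis
  intro i j
  funext m
  have hm := m.isLt
  rw [Pi.add_apply, mul0_right_e_apply, mul0_left_e_apply]
  simp only [Dmat_e_apply]
  by_cases h : (i:ℕ)+(j:ℕ)+1 < n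
  · rw [mul0_e_eq n i j h, Dmat_e_apply]
    simp only [Fin.val_mk]
    split_ifs <;> first
      | omega
      | (rw [show (m:ℕ)-(j:ℕ)-1-(i:ℕ) = (m:ℕ)-((i:ℕ)+(j:ℕ)+1) from by omega,
           show (m:ℕ)-(i:ℕ)-1-(j:ℕ) = (m:ℕ)-((i:ℕ)+(j:ℕ)+1) from by omega]
         push_cast
         ring)
      | norm_num
  · rw [mul0_e_eq_zero n i j h, map_zero]
    simp only [Pi.zero_apply]
    split_ifs <;> try omega
    all_goals simp

theorem stmt2 (n : ℕ) (hn : 0 < n) :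
    Module.finrank ℂ
      (derSubmodule n (mul0 n) (mul0_add_left n) (mul0_add_right n)
        (mul0_smul_left n) (mul0_smul_right n)) = n := by
  set S := derSubmodule n (mul0 n) (mul0_add_left n) (mul0_add_right n)
    (mul0_smul_left n) (mul0_smul_right n) with hS
  let z : Fin n := ⟨0, hn⟩
  let φ : S →ₗ[ℂ] (Fin n → ℂ) :=
    { toFun := fun D => (D : (Fin n → ℂ) →ₗ[ℂ] (Fin n → ℂ)) (e n z)
      map_add' := fun D1 D2 => rfl
      map_smul' := fun c D => rfl }
  have hbij : Function.Bijective φ := by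
    constructor
    · intro D1 D2 hEq
      apply Subtype.ext
      have hmem : (D1 : (Fin n → ℂ) →ₗ[ℂ] (Fin n → ℂ)) - D2 ∈ S := S.sub_mem D1.2 D2.2
      have hsub : IsDer (mul0 n) ((D1 : (Fin n → ℂ) →ₗ[ℂ] (Fin n → ℂ)) - D2) := hmem
      have h0 : ((D1 : (Fin n → ℂ) →ₗ[ℂ] (Fin n → ℂ)) - D2) (e n z) = 0 := by
        have : (D1 : (Fin n → ℂ) →ₗ[ℂ] (Fin n → ℂ)) (e n z)
            = (D2 : (Fin n → ℂ) →ₗ[ℂ] (Fin n → ℂ)) (e n z) := hEq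
        simp [LinearMap.sub_apply, this]
      have hz := der_eq_zero n hn _ hsub h0
      exact sub_eq_zero.mp hz
    · intro a
      refine ⟨⟨Dmat n a, isDer_Dmat n a⟩, ?_⟩
      show Dmat n a (e n z) = a
      funext m
      rw [Dmat_e_apply]
      have hm := m.isLt
      simp [z, ext0, hm]
  rw [LinearEquiv.finrank_eq (LinearEquiv.ofBijective φ hbij)]
  simp
end

section
/- Let A₅ be the 3-dimensional complex algebra with basis e₁,e₂,e₃ and nonzero products e₁e₁ = e₂, e₁e₂ = e₂e₁ = e₃. A linear map D on A₅ is a derivation if and only if D(e₁) = a e₁ + b e₂ + c e₃, D(e₂) = 2a e₂ + 2b e₃, D(e₃) = 3a e₃ for some a, b, c ∈ ℂ. In particular dim Der(A₅) = 3. -/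
noncomputable def mulA5 (x y : Fin 3 → ℂ) : Fin 3 → ℂ :=
  fun k => if k = 1 then x 0 * y 0 else if k = 2 then x 0 * y 1 + x 1 * y 0 else 0

lemma mulA5_add_left (x y z : Fin 3 → ℂ) :
    mulA5 (x + y) z = mulA5 x z + mulA5 y z := by
  funext k
  simp only [mulA5, Pi.add_apply]
  split <;> try split
  all_goals ring

lemma mulA5_add_right (x y z : Fin 3 → ℂ) :
    mulA5 x (y + z) = mulA5 x y + mulA5 x z := by
  funext k
  simp only [mulA5, Pi.add_apply]
  split <;> try split
  all_goals ring

lemma mulA5_smul_left (c : ℂ) (x y : Fin 3 → ℂ) :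
    mulA5 (c • x) y = c • mulA5 x y := by
  funext k
  simp only [mulA5, Pi.smul_apply, smul_eq_mul, mul_ite, mul_zero]
  split <;> try split
  all_goals ring

lemma mulA5_smul_right (c : ℂ) (x y : Fin 3 → ℂ) :
    mulA5 x (c • y) = c • mulA5 x y := by
  funext k
  simp only [mulA5, Pi.smul_apply, smul_eq_mul, mul_ite, mul_zero]
  split <;> try split
  all_goals ring


lemma vec_decomp3 (x : Fin 3 → ℂ) :
    x = x 0 • e 3 0 + x 1 • e 3 1 + x 2 • e 3 2 := by
  funext k
  fin_cases k <;> simp [e, Pi.single_apply]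

lemma D_apply3 (D : (Fin 3 → ℂ) →ₗ[ℂ] (Fin 3 → ℂ)) (x : Fin 3 → ℂ) :
    D x = x 0 • D (e 3 0) + x 1 • D (e 3 1) + x 2 • D (e 3 2) := by
  conv_lhs => rw [vec_decomp3 x]
  simp

lemma der_of_basis (D : (Fin 3 → ℂ) →ₗ[ℂ] (Fin 3 → ℂ)) (a b c : ℂ)
    (h0 : D (e 3 0) = a • e 3 0 + b • e 3 1 + c • e 3 2)
    (h1 : D (e 3 1) = (2 * a) • e 3 1 + (2 * b) • e 3 2)
    (h2 : D (e 3 2) = (3 * a) • e 3 2) : IsDer mulA5 D := by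
  have hval : ∀ z : Fin 3 → ℂ, D z =
      ![a * z 0, b * z 0 + 2 * a * z 1, c * z 0 + 2 * b * z 1 + 3 * a * z 2] := by
    intro z
    rw [D_apply3, h0, h1, h2]
    funext k
    fin_cases k <;> simp [e, Pi.single_apply] <;> ring
  intro x y
  funext k
  rw [Pi.add_apply, hval (mulA5 x y), hval x, hval y]
  fin_cases k <;> simp [mulA5] <;> ring

lemma basis_of_der (D : (Fin 3 → ℂ) →ₗ[ℂ] (Fin 3 → ℂ)) (hD : IsDer mulA5 D) :
    D (e 3 0) = (D (e 3 0) 0) • e 3 0 + (D (e 3 0) 1) • e 3 1 + (D (e 3 0) 2) • e 3 2 ∧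
    D (e 3 1) = (2 * D (e 3 0) 0) • e 3 1 + (2 * D (e 3 0) 1) • e 3 2 ∧
    D (e 3 2) = (3 * D (e 3 0) 0) • e 3 2 := by
  have he1 : mulA5 (e 3 0) (e 3 0) = e 3 1 := by
    funext k; fin_cases k <;> simp [mulA5, e, Pi.single_apply]
  have he2 : mulA5 (e 3 0) (e 3 1) = e 3 2 := by
    funext k; fin_cases k <;> simp [mulA5, e, Pi.single_apply]
  have h1 : D (e 3 1) = (2 * D (e 3 0) 0) • e 3 1 + (2 * D (e 3 0) 1) • e 3 2 := by
    have h := hD (e 3 0) (e 3 0)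
    rw [he1] at h
    rw [h]
    funext k
    fin_cases k <;> simp [mulA5, e, Pi.single_apply] <;> ring
  refine ⟨?_, h1, ?_⟩
  · funext k; fin_cases k <;> simp [e, Pi.single_apply]
  · have h := hD (e 3 0) (e 3 1)
    rw [he2] at h
    rw [h, h1]
    funext k
    fin_cases k <;> simp [mulA5, e, Pi.single_apply] <;> ring

noncomputable def psi3 : (Fin 3 → ℂ) →ₗ[ℂ] ((Fin 3 → ℂ) →ₗ[ℂ] (Fin 3 → ℂ)) where
  toFun v :=
    { toFun := fun x =>
        ![v 0 * x 0, v 1 * x 0 + 2 * v 0 * x 1, v 2 * x 0 + 2 * v 1 * x 1 + 3 * v 0 * x 2]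
      map_add' := by
        intro x y; funext k; fin_cases k <;> simp <;> ring
      map_smul' := by
        intro t x; funext k; fin_cases k <;> simp <;> ring }
  map_add' := by
    intro u v; ext x k; fin_cases k <;> simp <;> ring
  map_smul' := by
    intro t v; ext x k; fin_cases k <;> simp <;> ring

lemma psi3_basis (v : Fin 3 → ℂ) :
    psi3 v (e 3 0) = v 0 • e 3 0 + v 1 • e 3 1 + v 2 • e 3 2 ∧
    psi3 v (e 3 1) = (2 * v 0) • e 3 1 + (2 * v 1) • e 3 2 ∧
    psi3 v (e 3 2) = (3 * v 0) • e 3 2 := by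
  refine ⟨?_, ?_, ?_⟩ <;>
    (funext k; fin_cases k <;> simp [psi3, e, Pi.single_apply] <;> ring)

lemma psi3_inj : Function.Injective psi3 := by
  intro u v h
  have h0 := congrFun (congrFun (congrArg DFunLike.coe h) (e 3 0))
  funext k
  have hk := h0 k
  fin_cases k <;> simpa [psi3, e, Pi.single_apply] using hk

lemma range_psi3 :
    LinearMap.range psi3 =
      derSubmodule 3 mulA5 mulA5_add_left mulA5_add_right mulA5_smul_left mulA5_smul_right := by
  ext D
  constructor
  · rintro ⟨v, rfl⟩
    obtain ⟨h0, h1, h2⟩ := psi3_basis v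
    exact der_of_basis _ (v 0) (v 1) (v 2) h0 h1 h2
  · intro hD
    obtain ⟨h0, h1, h2⟩ := basis_of_der D hD
    set a := D (e 3 0) 0 with ha
    set b := D (e 3 0) 1 with hb
    set c := D (e 3 0) 2 with hc
    refine ⟨![a, b, c], ?_⟩
    obtain ⟨g0, g1, g2⟩ := psi3_basis ![a, b, c]
    refine LinearMap.ext fun x => ?_
    rw [D_apply3 (psi3 ![a, b, c]) x, D_apply3 D x, h0, h1, h2, g0, g1, g2]
    simp

theorem stmt12 :
    (∀ D : (Fin 3 → ℂ) →ₗ[ℂ] (Fin 3 → ℂ),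
      IsDer mulA5 D ↔
        ∃ a b c : ℂ,
          D (e 3 0) = a • e 3 0 + b • e 3 1 + c • e 3 2 ∧
          D (e 3 1) = (2 * a) • e 3 1 + (2 * b) • e 3 2 ∧
          D (e 3 2) = (3 * a) • e 3 2) ∧
    Module.finrank ℂ
      (derSubmodule 3 mulA5 mulA5_add_left mulA5_add_right
        mulA5_smul_left mulA5_smul_right) = 3 := by
  constructor
  · intro D
    constructor
    · intro hD
      obtain ⟨h0, h1, h2⟩ := basis_of_der D hD
      exact ⟨D (e 3 0) 0, D (e 3 0) 1, D (e 3 0) 2, h0, h1, h2⟩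
    · rintro ⟨a, b, c, h0, h1, h2⟩
      exact der_of_basis D a b c h0 h1 h2
  · rw [← range_psi3]
    rw [LinearMap.finrank_range_of_inj psi3_inj]
    simp
end
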